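/- If s is a nonzero root of a polynomial p = Σᵢ aᵢ λⁱ over a valued field K, then val(s) is a tropical root of trop(p), i.e., the minimum defining trop(p)(val(s)) = minᵢ(val(aᵢ) + i·val(s)) is attained by at least two distinct indices. -/
import Mathlib


/-- If s is a nonzero root of p = Σᵢ aᵢ λⁱ over a valued field, then
val(s) is a tropical root of trop(p): the minimum defining
trop(p)(val s) = minᵢ (val(aᵢ) + i·val(s)) is attained by at least
two distinct indices. -/
theorem val_root_is_tropical_root
    {K : Type*} [Field K] (val : K → WithTop ℝ)
    (h0 : ∀ x : K, val x = ⊤ ↔ x = 0)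
    (hmul : ∀ x y : K, val (x * y) = val x + val y)
    (hadd : ∀ x y : K, min (val x) (val y) ≤ val (x + y))
    (d : ℕ) (a : Fin (d + 1) → K) (hp : ∃ i, a i ≠ 0)
    (s : K) (hs : s ≠ 0) (hroot : ∑ i : Fin (d + 1), a i * s ^ (i : ℕ) = 0)
    (ω₀ : ℝ) (hω : val s = (ω₀ : WithTop ℝ)) :
    ∃ j k : Fin (d + 1), j ≠ k ∧
      (∀ i : Fin (d + 1),
        val (a j) + (((j : ℕ) * ω₀ : ℝ) : WithTop ℝ) ≤
          val (a i) + (((i : ℕ) * ω₀ : ℝ) : WithTop ℝ)) ∧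
      val (a j) + (((j : ℕ) * ω₀ : ℝ) : WithTop ℝ) =
        val (a k) + (((k : ℕ) * ω₀ : ℝ) : WithTop ℝ) := by
  -- val 1 = 0
  have h1 : val 1 = 0 := by
    have hm := hmul 1 1
    rw [one_mul] at hm
    have hne : val 1 ≠ ⊤ := by simp [h0]
    cases hv : val 1 with
    | top => exact absurd hv hne
    | coe r =>
      rw [hv] at hm
      have hr : r = r + r := by exact_mod_cast hm
      have : r = 0 := by linarith
      simp [this]
  -- val (-1) = 0
  have hneg1 : val (-1) = 0 := by
    have hm := hmul (-1) (-1)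
    rw [neg_one_mul, neg_neg, h1] at hm
    cases hv : val (-1) with
    | top => rw [hv] at hm; simp at hm
    | coe r =>
      rw [hv] at hm
      have hr : (0 : ℝ) = r + r := by exact_mod_cast hm
      have : r = 0 := by linarith
      simp [this]
  have hvneg : ∀ y : K, val (-y) = val y := by
    intro y
    have := hmul (-1) y
    rw [neg_one_mul, hneg1, zero_add] at this
    exact this
  -- val (s ^ n) = n * ω₀
  have hpow : ∀ n : ℕ, val (s ^ n) = ((n * ω₀ : ℝ) : WithTop ℝ) := by
    intro n
    induction n with
    | zero => simp [h1]
    | succ n ih =>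
      have : s ^ (n + 1) = s ^ n * s := by ring
      rw [this, hmul, ih, hω]
      rw [← WithTop.coe_add]
      congr 1
      push_cast
      ring
  -- key: val (x + y) = val x when val x < val y
  have key_add : ∀ x y : K, val x < val y → val (x + y) = val x := by
    intro x y hlt
    have h1' : val x ≤ val (x + y) := by
      have := hadd x y
      rwa [min_eq_left hlt.le] at this
    refine le_antisymm ?_ h1'
    by_contra hc
    push_neg at hc
    have hx : x = (x + y) + (-y) := by ring
    have h3 := hadd (x + y) (-y)
    rw [hvneg, ← hx] at h3
    exact absurd h3 (not_le.mpr (lt_min hc hlt))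
  -- val of sum is > c if all terms are
  have sum_lem : ∀ (c : WithTop ℝ), c < ⊤ → ∀ (g : Fin (d+1) → K)
      (t : Finset (Fin (d+1))), (∀ i ∈ t, c < val (g i)) →
      c < val (∑ i ∈ t, g i) := by
    intro c hc g t
    induction t using Finset.cons_induction with
    | empty => intro _; simpa [(h0 0).mpr rfl] using hc
    | cons x t hx ih =>
      intro h
      rw [Finset.sum_cons]
      refine lt_of_lt_of_le ?_ (hadd _ _)
      exact lt_min (h x (Finset.mem_cons_self x t))
        (ih (fun i hi => h i (Finset.mem_cons_of_mem hi)))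
  set f : Fin (d + 1) → WithTop ℝ :=
    fun i => val (a i) + (((i : ℕ) * ω₀ : ℝ) : WithTop ℝ) with hf
  have hfg : ∀ i : Fin (d + 1), val (a i * s ^ (i : ℕ)) = f i := by
    intro i; rw [hmul, hpow]
  obtain ⟨j, -, hj⟩ := Finset.exists_min_image Finset.univ f ⟨0, Finset.mem_univ 0⟩
  have hjmin : ∀ i, f j ≤ f i := fun i => hj i (Finset.mem_univ i)
  have hfj_top : f j < ⊤ := by
    obtain ⟨i, hi⟩ := hp
    refine lt_of_le_of_lt (hjmin i) ?_
    have : val (a i) ≠ ⊤ := fun h => hi ((h0 _).mp h)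
    exact WithTop.add_lt_top.mpr ⟨this.lt_top, WithTop.coe_lt_top _⟩
  by_contra hcon
  push_neg at hcon
  have hstrict : ∀ k, k ≠ j → f j < f k := by
    intro k hk
    exact lt_of_le_of_ne (hjmin k) (hcon j k (Ne.symm hk) hjmin)
  -- split the sum
  have hsplit : a j * s ^ (j : ℕ) +
      ∑ i ∈ Finset.univ.erase j, a i * s ^ (i : ℕ) =
      ∑ i : Fin (d + 1), a i * s ^ (i : ℕ) :=
    Finset.add_sum_erase _ (fun i => a i * s ^ (i : ℕ)) (Finset.mem_univ j)
  have hrest : f j < val (∑ i ∈ Finset.univ.erase j, a i * s ^ (i : ℕ)) := by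
    refine sum_lem (f j) hfj_top _ _ ?_
    intro i hi
    rw [hfg]
    exact hstrict i (Finset.ne_of_mem_erase hi)
  have hval : val (∑ i : Fin (d + 1), a i * s ^ (i : ℕ)) = f j := by
    rw [← hsplit, key_add _ _ (by rw [hfg]; exact hrest)]
    exact hfg j
  rw [hroot, (h0 0).mpr rfl] at hval
  exact absurd hval.symm hfj_top.ne
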